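/- arXiv:1712.05037 — 4 statements merged into one kernel-verified Lean document; each statement's English description precedes it below -/
import Mathlib

section
/- Lewis Carroll's identity (Dodgson condensation): for an n×n matrix M over a commutative ring and indices 1 ≤ a < a' ≤ n, 1 ≤ b < b' ≤ n, we have det(M_a^b)·det(M_{a'}^{b'}) − det(M_a^{b'})·det(M_{a'}^b) = det(M)·det(M_{a,a'}^{b,b'}), where M_A^B denotes M with the rows indexed by A and columns indexed by B removed. -/
open Matrix

/-- The submatrix of `M` obtained by deleting the rows indexed by `A` and the
columns indexed by `B` (where the complements of `A` and `B` both have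
cardinality `m`). -/
noncomputable def delMinor {R : Type*} [CommRing R] {n m : ℕ}
    (M : Matrix (Fin n) (Fin n) R) (A B : Finset (Fin n))
    (hA : Aᶜ.card = m) (hB : Bᶜ.card = m) : Matrix (Fin m) (Fin m) R :=
  M.submatrix (Aᶜ.orderEmbOfFin hA) (Bᶜ.orderEmbOfFin hB)

namespace DodgsonAux

variable {R : Type*} [CommRing R]

/-- Cofactor expansion for a matrix with a unit vector column. -/
lemma det_updateColumn_single {k : ℕ} (N : Matrix (Fin (k + 1)) (Fin (k + 1)) R)
    (p q : Fin (k + 1)) :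
    det (N.updateCol q (Pi.single p 1)) =
      (-1) ^ ((p : ℕ) + (q : ℕ)) * det (N.submatrix p.succAbove q.succAbove) := by
  rw [det_succ_column _ q, Fintype.sum_eq_single p]
  · rw [updateCol_self, Pi.single_eq_same, mul_one, submatrix_updateCol_succAbove]
  · intro i hi
    rw [updateCol_self, Pi.single_eq_of_ne hi, mul_zero, zero_mul]

variable {m : Type*} [Fintype m] [DecidableEq m]

lemma updateCol_comm (A : Matrix m m R) {j j' : m} (h : j ≠ j') (c c' : m → R) :
    (A.updateCol j c).updateCol j' c' = (A.updateCol j' c').updateCol j c := by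
  ext i k
  rcases eq_or_ne k j' with rfl | h1
  · rcases eq_or_ne k j with rfl | h2
    · exact absurd rfl h
    · simp [updateCol_apply, h2]
  · rcases eq_or_ne k j with rfl | h2
    · simp [updateCol_apply, h1]
    · simp [updateCol_apply, h1, h2]

lemma det_expand_column (A : Matrix m m R) (j : m) (v : m → R) :
    det (A.updateCol j v) = ∑ i, v i * det (A.updateCol j (Pi.single i 1)) := by
  have hv : v = ∑ i, v i • (Pi.single i 1 : m → R) := by
    ext k
    simp [Pi.single_apply, Finset.sum_ite_eq']
  rw [← cramer_apply]
  conv_lhs => rw [hv]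
  rw [map_sum]
  simp [cramer_apply, det_updateCol_smul, Finset.sum_apply]

lemma updateCol_single_self (c : m) :
    (1 : Matrix m m R).updateCol c (Pi.single c 1) = 1 := by
  ext r j
  by_cases hj : j = c
  · rw [hj, updateCol_self, Pi.single_apply, one_apply]
  · rw [updateCol_ne hj]

lemma det_one_two_dup {b b' k i : m} (hbb' : b ≠ b') (h1 : ¬(k = b ∧ i = b'))
    (h2 : ¬(k = b' ∧ i = b)) :
    det (((1 : Matrix m m R).updateCol b (Pi.single k 1)).updateCol b'
      (Pi.single i 1)) = 0 := by
  set A := ((1 : Matrix m m R).updateCol b (Pi.single k 1)).updateCol b'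
      (Pi.single i 1) with hA
  have colb : ∀ r, A r b = (Pi.single k 1 : m → R) r := by
    intro r
    rw [hA, updateCol_ne hbb', updateCol_self]
  have colb' : ∀ r, A r b' = (Pi.single i 1 : m → R) r := by
    intro r
    rw [hA, updateCol_self]
  have colother : ∀ j, j ≠ b → j ≠ b' → ∀ r, A r j = (if r = j then (1 : R) else 0) := by
    intro j hjb hjb' r
    rw [hA, updateCol_ne hjb', updateCol_ne hjb, one_apply]
  by_cases hk : k = i
  · exact det_zero_of_column_eq hbb' fun r => by rw [colb r, colb' r, hk]
  · by_cases hkb : k = b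
    · have hib' : i ≠ b' := fun h => h1 ⟨hkb, h⟩
      have hib : i ≠ b := fun h => hk (hkb.trans h.symm)
      exact det_zero_of_column_eq (show i ≠ b' from hib') fun r => by
        rw [colother i hib hib' r, colb' r, Pi.single_apply]
    · by_cases hkb' : k = b'
      · have hib : i ≠ b := fun h => h2 ⟨hkb', h⟩
        have hib' : i ≠ b' := fun h => hk (hkb'.trans h.symm)
        exact det_zero_of_column_eq (show i ≠ b' from hib') fun r => by
          rw [colother i hib hib' r, colb' r, Pi.single_apply]
      · exact det_zero_of_column_eq (show k ≠ b from hkb) fun r => by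
          rw [colother k hkb hkb' r, colb r, Pi.single_apply]

lemma det_one_two_swap {b b' : m} (hbb' : b ≠ b') :
    det (((1 : Matrix m m R).updateCol b (Pi.single b' 1)).updateCol b'
      (Pi.single b 1)) = -1 := by
  have hperm : ∀ r j : m, ((Equiv.swap b b').permMatrix R) r j
      = if Equiv.swap b b' r = j then 1 else 0 := by
    intro r j
    simp [Equiv.Perm.permMatrix, PEquiv.toMatrix_apply, Equiv.toPEquiv_apply,
      Option.mem_def, eq_comm]
  have hAperm : ((1 : Matrix m m R).updateCol b (Pi.single b' 1)).updateCol b'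
      (Pi.single b 1) = (Equiv.swap b b').permMatrix R := by
    ext r j
    rw [hperm r j]
    by_cases hj : j = b'
    · rw [hj, updateCol_self, Pi.single_apply]
      by_cases hr : r = b
      · simp [hr, Equiv.swap_apply_left]
      · by_cases hr2 : r = b'
        · simp [hr2, Equiv.swap_apply_right, hbb', hbb'.symm]
        · simp [Equiv.swap_apply_of_ne_of_ne hr hr2, hr, hr2]
    · rw [updateCol_ne hj]
      by_cases hj2 : j = b
      · rw [hj2, updateCol_self, Pi.single_apply]
        by_cases hr : r = b'
        · simp [hr, Equiv.swap_apply_right]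
        · by_cases hr2 : r = b
          · simp [hr2, Equiv.swap_apply_left, hbb', Ne.symm hbb']
          · simp [Equiv.swap_apply_of_ne_of_ne hr2 hr, hr, hr2]
      · rw [updateCol_ne hj2, one_apply]
        by_cases hr : r = b
        · simp [hr, Equiv.swap_apply_left, Ne.symm hj, Ne.symm hj2]
        · by_cases hr2 : r = b'
          · simp [hr2, Equiv.swap_apply_right, Ne.symm hj2, Ne.symm hj]
          · simp [Equiv.swap_apply_of_ne_of_ne hr hr2]
  rw [hAperm, det_permutation, Equiv.Perm.sign_swap hbb']
  simp

lemma det_one_two_singles {b b' : m} (hbb' : b ≠ b') (k i : m) :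
    det (((1 : Matrix m m R).updateCol b (Pi.single k 1)).updateCol b' (Pi.single i 1)) =
      (if k = b then 1 else 0) * (if i = b' then 1 else 0)
        - (if k = b' then 1 else 0) * (if i = b then 1 else 0) := by
  by_cases hkb : k = b
  · by_cases hib' : i = b'
    · rw [hkb, hib', updateCol_single_self, updateCol_single_self, det_one]
      simp [hbb', Ne.symm hbb']
    · rw [det_one_two_dup hbb' (fun h => hib' h.2)
        (fun h => hbb' (hkb.symm.trans h.1))]
      simp [hkb, hib', hbb']
  · by_cases hkb' : k = b'
    · by_cases hib : i = b
      · rw [hkb', hib, det_one_two_swap hbb']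
        simp [Ne.symm hbb']
      · rw [det_one_two_dup hbb' (fun h => hkb h.1) (fun h => hib h.2)]
        simp [hkb, hib]
    · rw [det_one_two_dup hbb' (fun h => hkb h.1) (fun h => hkb' h.1)]
      simp [hkb, hkb']

lemma det_one_updateCol_two {b b' : m} (hbb' : b ≠ b') (u v : m → R) :
    det (((1 : Matrix m m R).updateCol b u).updateCol b' v)
      = u b * v b' - u b' * v b := by
  rw [det_expand_column]
  have inner : ∀ i : m,
      det (((1 : Matrix m m R).updateCol b u).updateCol b' (Pi.single i 1))
        = ∑ k, u k * det (((1 : Matrix m m R).updateCol b (Pi.single k 1)).updateCol b'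
            (Pi.single i 1)) := by
    intro i
    rw [updateCol_comm _ hbb', det_expand_column]
    refine Finset.sum_congr rfl fun k _ => ?_
    rw [updateCol_comm _ hbb'.symm]
  calc ∑ i, v i * det (((1 : Matrix m m R).updateCol b u).updateCol b' (Pi.single i 1))
      = ∑ i, ∑ k, v i * (u k *
          ((if k = b then 1 else 0) * (if i = b' then 1 else 0)
            - (if k = b' then 1 else 0) * (if i = b then 1 else 0))) := by
        refine Finset.sum_congr rfl fun i _ => ?_
        rw [inner i, Finset.mul_sum]
        refine Finset.sum_congr rfl fun k _ => ?_
        rw [det_one_two_singles hbb']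
    _ = u b * v b' - u b' * v b := by
        simp only [mul_sub, mul_ite, ite_mul, mul_one, mul_zero, zero_mul, one_mul,
          Finset.sum_sub_distrib]
        rw [Finset.sum_comm]
        simp [Finset.sum_ite_eq', Finset.sum_sub_distrib, mul_comm]

lemma mul_updateColumn (A B : Matrix m m R) (j : m) (c : m → R) :
    A * (B.updateCol j c) = (A * B).updateCol j (A.mulVec c) := by
  ext i k
  rcases eq_or_ne k j with rfl | hk
  · simp [mul_apply, updateCol_apply, mulVec, dotProduct]
  · simp [mul_apply, updateCol_apply, hk]

end DodgsonAux

open DodgsonAux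

section Emb

variable {R : Type*} [CommRing R] {n : ℕ}

lemma delMinor_single (M : Matrix (Fin (n + 2)) (Fin (n + 2)) R) (a b : Fin (n + 2))
    (h : ({a} : Finset (Fin (n + 2)))ᶜ.card = n + 1)
    (h' : ({b} : Finset (Fin (n + 2)))ᶜ.card = n + 1) :
    delMinor M {a} {b} h h' = M.submatrix a.succAbove b.succAbove := by
  have key : ∀ (c : Fin (n + 2)) (hc : ({c} : Finset (Fin (n + 2)))ᶜ.card = n + 1),
      ⇑(({c} : Finset (Fin (n + 2)))ᶜ.orderEmbOfFin hc) = c.succAbove := by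
    intro c hc
    exact (Finset.orderEmbOfFin_unique hc
      (fun i => by simp [Fin.succAbove_ne]) (Fin.strictMono_succAbove c)).symm
  unfold delMinor
  rw [key a h, key b h']

lemma delMinor_pair (M : Matrix (Fin (n + 2)) (Fin (n + 2)) R) {a a' : Fin (n + 2)}
    {b b' : Fin (n + 2)} (ha : a < a') (hb : b < b')
    (h5 : ({a, a'} : Finset (Fin (n + 2)))ᶜ.card = n)
    (h6 : ({b, b'} : Finset (Fin (n + 2)))ᶜ.card = n) :
    delMinor M {a, a'} {b, b'} h5 h6 =
      M.submatrix
        (a'.succAbove ∘ (a.castPred (Fin.ne_last_of_lt ha)).succAbove)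
        (b'.succAbove ∘ (b.castPred (Fin.ne_last_of_lt hb)).succAbove) := by
  have key : ∀ (c c' : Fin (n + 2)) (hcc' : c < c')
      (hc : ({c, c'} : Finset (Fin (n + 2)))ᶜ.card = n),
      ⇑(({c, c'} : Finset (Fin (n + 2)))ᶜ.orderEmbOfFin hc)
        = c'.succAbove ∘ (c.castPred (Fin.ne_last_of_lt hcc')).succAbove := by
    intro c c' hcc' hc
    refine (Finset.orderEmbOfFin_unique hc (fun i => ?_)
      ((Fin.strictMono_succAbove c').comp (Fin.strictMono_succAbove _))).symm
    simp only [Finset.mem_compl, Finset.mem_insert, Finset.mem_singleton, Function.comp_apply]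
    push_neg
    constructor
    · intro hcontra
      have hc' : c'.succAbove ((c.castPred (Fin.ne_last_of_lt hcc'))) = c :=
        Fin.succAbove_castPred_of_lt _ _ hcc'
      exact Fin.succAbove_ne _ i
        (Fin.succAbove_right_injective (hcontra.trans hc'.symm))
    · exact Fin.succAbove_ne _ _
  unfold delMinor
  rw [key a a' ha h5, key b b' hb h6]

lemma adjugate_entry (M : Matrix (Fin (n + 2)) (Fin (n + 2)) R) (a b : Fin (n + 2))
    (h : ({a} : Finset (Fin (n + 2)))ᶜ.card = n + 1)
    (h' : ({b} : Finset (Fin (n + 2)))ᶜ.card = n + 1) :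
    adjugate M b a = (-1) ^ ((a : ℕ) + (b : ℕ)) * (delMinor M {a} {b} h h').det := by
  rw [adjugate_fin_succ_eq_det_submatrix, delMinor_single]

lemma double_single_det (M : Matrix (Fin (n + 2)) (Fin (n + 2)) R) {a a' b b' : Fin (n + 2)}
    (ha : a < a') (hb : b < b')
    (h5 : ({a, a'} : Finset (Fin (n + 2)))ᶜ.card = n)
    (h6 : ({b, b'} : Finset (Fin (n + 2)))ᶜ.card = n) :
    det ((M.updateCol b (Pi.single a 1)).updateCol b' (Pi.single a' 1))
      = (-1) ^ ((a : ℕ) + (a' : ℕ) + (b : ℕ) + (b' : ℕ))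
        * (delMinor M {a, a'} {b, b'} h5 h6).det := by
  have hane : a ≠ Fin.last (n + 1) := Fin.ne_last_of_lt ha
  have hbne : b ≠ Fin.last (n + 1) := Fin.ne_last_of_lt hb
  have hsa : a'.succAbove (a.castPred hane) = a := Fin.succAbove_castPred_of_lt _ _ ha
  have hsb : b'.succAbove (b.castPred hbne) = b := Fin.succAbove_castPred_of_lt _ _ hb
  rw [det_updateColumn_single]
  have hsub : (M.updateCol b (Pi.single a 1)).submatrix a'.succAbove b'.succAbove
      = (M.submatrix a'.succAbove b'.succAbove).updateCol (b.castPred hbne)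
          (Pi.single (a.castPred hane) 1) := by
    ext i j
    rcases eq_or_ne j (b.castPred hbne) with rfl | hj
    · rw [submatrix_apply, hsb, updateCol_self, updateCol_self]
      by_cases hi : i = a.castPred hane
      · subst hi
        rw [hsa, Pi.single_eq_same, Pi.single_eq_same]
      · have h1 : a'.succAbove i ≠ a := fun h =>
          hi (Fin.succAbove_right_injective (h.trans hsa.symm))
        rw [Pi.single_eq_of_ne h1, Pi.single_eq_of_ne hi]
    · have hj' : b'.succAbove j ≠ b := fun h =>
        hj (Fin.succAbove_right_injective (h.trans hsb.symm))
      rw [submatrix_apply, updateCol_ne hj', updateCol_ne hj, submatrix_apply]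
  rw [hsub, det_updateColumn_single, delMinor_pair M ha hb h5 h6, submatrix_submatrix,
    ← mul_assoc, ← pow_add]
  congr 2
  · simp only [Fin.coe_castPred]
    omega

/-- The key multiplied identity, valid over any commutative ring. -/
lemma dodgson_mul {R : Type*} [CommRing R] {n : ℕ}
    (M : Matrix (Fin (n + 2)) (Fin (n + 2)) R)
    (a a' b b' : Fin (n + 2)) (ha : a < a') (hb : b < b')
    (h1 : ({a} : Finset (Fin (n + 2)))ᶜ.card = n + 1)
    (h2 : ({a'} : Finset (Fin (n + 2)))ᶜ.card = n + 1)
    (h3 : ({b} : Finset (Fin (n + 2)))ᶜ.card = n + 1)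
    (h4 : ({b'} : Finset (Fin (n + 2)))ᶜ.card = n + 1)
    (h5 : ({a, a'} : Finset (Fin (n + 2)))ᶜ.card = n)
    (h6 : ({b, b'} : Finset (Fin (n + 2)))ᶜ.card = n) :
    M.det * ((delMinor M {a} {b} h1 h3).det * (delMinor M {a'} {b'} h2 h4).det
      - (delMinor M {a} {b'} h1 h4).det * (delMinor M {a'} {b} h2 h3).det)
      = M.det * (M.det * (delMinor M {a, a'} {b, b'} h5 h6).det) := by
  have hbb' : b ≠ b' := ne_of_lt hb
  have hmv : ∀ (c : Fin (n + 2)), M.mulVec (fun i => adjugate M i c)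
      = M.det • (Pi.single c 1 : Fin (n + 2) → R) := by
    intro c
    funext j
    have : M.mulVec (fun i => adjugate M i c) j = (M * adjugate M) j c := by
      simp [mulVec, dotProduct, mul_apply]
    rw [this, mul_adjugate]
    simp [Pi.single_apply, one_apply, eq_comm]
  have hQ : M * (((1 : Matrix (Fin (n + 2)) (Fin (n + 2)) R).updateCol b
        (fun i => adjugate M i a)).updateCol b' (fun i => adjugate M i a'))
      = ((M.updateCol b (M.det • (Pi.single a 1 : Fin (n + 2) → R))).updateCol b'
          (M.det • (Pi.single a' 1 : Fin (n + 2) → R))) := by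
    rw [mul_updateColumn, mul_updateColumn, mul_one, hmv, hmv]
  have H := congrArg det hQ
  rw [det_mul, det_one_updateCol_two hbb'] at H
  rw [det_updateCol_smul] at H
  rw [updateCol_comm _ hbb'] at H
  rw [det_updateCol_smul] at H
  rw [updateCol_comm _ hbb'.symm] at H
  rw [double_single_det M ha hb h5 h6] at H
  rw [adjugate_entry M a b h1 h3, adjugate_entry M a b' h1 h4,
    adjugate_entry M a' b h2 h3, adjugate_entry M a' b' h2 h4] at H
  set s : R := (-1) ^ ((a : ℕ) + (a' : ℕ) + (b : ℕ) + (b' : ℕ)) with hs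
  set mab := (delMinor M {a} {b} h1 h3).det
  set ma'b' := (delMinor M {a'} {b'} h2 h4).det
  set mab' := (delMinor M {a} {b'} h1 h4).det
  set ma'b := (delMinor M {a'} {b} h2 h3).det
  set m2 := (delMinor M {a, a'} {b, b'} h5 h6).det
  have hss : s * s = 1 := by
    rw [hs, ← pow_add, ← two_mul, pow_mul]
    norm_num
  have H3 : M.det * (s * (mab * ma'b' - mab' * ma'b)) = M.det * (M.det * (s * m2)) := by
    rw [hs]
    linear_combination H
  calc M.det * (mab * ma'b' - mab' * ma'b)
      = (s * s) * (M.det * (mab * ma'b' - mab' * ma'b)) := by rw [hss, one_mul]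
    _ = s * (M.det * (s * (mab * ma'b' - mab' * ma'b))) := by ring
    _ = s * (M.det * (M.det * (s * m2))) := by rw [H3]
    _ = (s * s) * (M.det * (M.det * m2)) := by ring
    _ = M.det * (M.det * m2) := by rw [hss, one_mul]

end Emb

/-- Lewis Carroll's identity (Dodgson condensation). -/
theorem dodgson_condensation {R : Type*} [CommRing R] {n : ℕ}
    (M : Matrix (Fin (n + 2)) (Fin (n + 2)) R)
    (a a' b b' : Fin (n + 2)) (ha : a < a') (hb : b < b')
    (h1 : ({a} : Finset (Fin (n + 2)))ᶜ.card = n + 1)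
    (h2 : ({a'} : Finset (Fin (n + 2)))ᶜ.card = n + 1)
    (h3 : ({b} : Finset (Fin (n + 2)))ᶜ.card = n + 1)
    (h4 : ({b'} : Finset (Fin (n + 2)))ᶜ.card = n + 1)
    (h5 : ({a, a'} : Finset (Fin (n + 2)))ᶜ.card = n)
    (h6 : ({b, b'} : Finset (Fin (n + 2)))ᶜ.card = n) :
    (delMinor M {a} {b} h1 h3).det * (delMinor M {a'} {b'} h2 h4).det
      - (delMinor M {a} {b'} h1 h4).det * (delMinor M {a'} {b} h2 h3).det
      = M.det * (delMinor M {a, a'} {b, b'} h5 h6).det := by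
  classical
  set X : Matrix (Fin (n + 2)) (Fin (n + 2)) (MvPolynomial (Fin (n + 2) × Fin (n + 2)) ℤ) :=
    Matrix.mvPolynomialX (Fin (n + 2)) (Fin (n + 2)) ℤ with hX
  have hdet : X.det ≠ 0 := Matrix.det_mvPolynomialX_ne_zero _ ℤ
  have Hgen := dodgson_mul X a a' b b' ha hb h1 h2 h3 h4 h5 h6
  have Hcancel := mul_left_cancel₀ hdet Hgen
  set φ : MvPolynomial (Fin (n + 2) × Fin (n + 2)) ℤ →+* R :=
    MvPolynomial.eval₂Hom (Int.castRingHom R) (fun p => M p.1 p.2) with hφ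
  have hXM : X.map φ = M := by
    ext i j
    simp [hX, hφ, Matrix.map_apply]
  have hmapmin : ∀ (A B : Finset (Fin (n + 2))) {k : ℕ} (hA : Aᶜ.card = k) (hB : Bᶜ.card = k),
      φ (delMinor X A B hA hB).det = (delMinor M A B hA hB).det := by
    intro A B k hA hB
    rw [RingHom.map_det]
    congr 1
    ext i j
    rw [← hXM]
    simp [delMinor, Matrix.map_apply]
  have hdetX : φ X.det = M.det := by
    rw [RingHom.map_det, RingHom.mapMatrix_apply, hXM]
  have := congrArg φ Hcancel
  rw [map_sub, _root_.map_mul, _root_.map_mul, _root_.map_mul, hdetX,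
    hmapmin {a} {b} h1 h3, hmapmin {a'} {b'} h2 h4, hmapmin {a} {b'} h1 h4,
    hmapmin {a'} {b} h2 h3, hmapmin {a, a'} {b, b'} h5 h6] at this
  exact this
end

section
/- If M is a real n×n matrix, I, J ⊆ [n] with |I| = |J| < n, the minor |M_{I,J}| is nonpositive, and there exist i ∈ I, j ∈ J, i' ∉ I, j' ∉ J with i < i' and j < j', then at least one of the minors |M_{(I∪{i'})∖{i}, (J∪{j'})∖{j}}|, |M_{I,(J∪{j'})∖{j}}|, |M_{(I∪{i'})∖{i}, J}|, |M_{I∪{i'}, J∪{j'}}|, |M_{I∖{i}, J∖{j}}| is also nonpositive. -/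
open Matrix

/-- The minor of `M` with rows indexed by `I` and columns indexed by `J`
(defined to be `0` when `I` and `J` have different cardinalities). -/
noncomputable def pminor {n : ℕ} (M : Matrix (Fin n) (Fin n) ℝ)
    (I J : Finset (Fin n)) : ℝ :=
  if h : I.card = J.card then
    (M.submatrix (I.orderEmbOfFin rfl) (J.orderEmbOfFin h.symm)).det
  else 0

lemma updateCol_comm' {m n : Type*} [DecidableEq n] (A : Matrix m n ℝ) {c d : n}
    (h : c ≠ d) (u v : m → ℝ) :
    (A.updateCol c u).updateCol d v = (A.updateCol d v).updateCol c u := by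
  ext i k
  simp only [Matrix.updateCol_apply]
  rcases eq_or_ne k d with rfl | h1 <;> rcases eq_or_ne k c with rfl | h2 <;> simp_all

lemma updateCol_submatrix' {l m o p : Type*} [DecidableEq m] [DecidableEq p]
    (A : Matrix l m ℝ) (f : o → l) (g : p → m) (hg : Function.Injective g)
    (d : p) (v : l → ℝ) :
    (A.updateCol (g d) v).submatrix f g = (A.submatrix f g).updateCol d (v ∘ f) := by
  ext i k
  simp [Matrix.updateCol_apply, hg.eq_iff]

lemma det_updateColumn_single {n : ℕ} (A : Matrix (Fin (n+1)) (Fin (n+1)) ℝ) (r c : Fin (n+1)) :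
    (A.updateCol c (Pi.single r 1)).det
      = (-1) ^ ((r : ℕ) + (c : ℕ)) * (A.submatrix r.succAbove c.succAbove).det := by
  rw [← det_transpose, ← Matrix.updateRow_transpose, ← Matrix.adjugate_apply,
    Matrix.adjugate_fin_succ_eq_det_submatrix]
  rw [show Aᵀ.submatrix c.succAbove r.succAbove = (A.submatrix r.succAbove c.succAbove)ᵀ from rfl,
    det_transpose, add_comm]

lemma single_comp_succAbove {N : ℕ} (r s : Fin (N+1)) (s' : Fin N) (hs : r.succAbove s' = s) :
    (Pi.single s (1:ℝ)) ∘ r.succAbove = Pi.single s' 1 := by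
  funext q
  simp only [Function.comp_apply, Pi.single_apply, ← hs,
    (Fin.succAbove_right_injective (p := r)).eq_iff]

lemma det_two_single {N : ℕ} (A : Matrix (Fin (N+2)) (Fin (N+2)) ℝ)
    (r s c d : Fin (N+2)) (s' d' : Fin (N+1)) (hcd : c ≠ d)
    (hs : r.succAbove s' = s) (hd : c.succAbove d' = d) :
    ((A.updateCol c (Pi.single r 1)).updateCol d (Pi.single s 1)).det
      = (-1) ^ ((r:ℕ) + (c:ℕ)) * ((-1) ^ ((s':ℕ) + (d':ℕ)) *
        ((A.submatrix r.succAbove c.succAbove).submatrix s'.succAbove d'.succAbove).det) := by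
  rw [updateCol_comm' _ hcd, det_updateColumn_single]
  congr 1
  rw [← hd, updateCol_submatrix' A r.succAbove c.succAbove
      (Fin.succAbove_right_injective) d' (Pi.single s 1),
    single_comp_succAbove r s s' hs, det_updateColumn_single]

lemma det_one_updateCol_two {N : ℕ} (u v : Fin N → ℝ) {c d : Fin N} (h : c ≠ d) :
    (((1 : Matrix (Fin N) (Fin N) ℝ).updateCol c u).updateCol d v).det
      = u c * v d - u d * v c := by
  have key : ((1 : Matrix (Fin N) (Fin N) ℝ).updateCol c u).updateCol d v
      = 1 + (Matrix.of fun i (t : Fin 2) =>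
            if t = 0 then u i - (if i = c then 1 else 0) else v i - (if i = d then 1 else 0)) *
          (Matrix.of fun (t : Fin 2) k =>
            if t = 0 then (if k = c then (1:ℝ) else 0) else (if k = d then 1 else 0)) := by
    ext i k
    simp only [Matrix.add_apply, Matrix.mul_apply, Fin.sum_univ_two, Matrix.of_apply,
      Matrix.updateCol_apply, Matrix.one_apply]
    rcases eq_or_ne k d with rfl | h1 <;> rcases eq_or_ne k c with rfl | h2 <;>
      simp_all
  rw [key, Matrix.det_one_add_mul_comm, Matrix.det_fin_two]
  simp only [Matrix.add_apply, Matrix.mul_apply, Fin.sum_univ_two, Matrix.of_apply,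
    Matrix.one_apply]
  simp [h, h.symm]
  ring

lemma mul_adj_cols {N : ℕ} (A : Matrix (Fin N) (Fin N) ℝ)
    {c d : Fin N} (hcd : c ≠ d) (r s : Fin N) :
    A * (((1 : Matrix (Fin N) (Fin N) ℝ).updateCol c (fun k => adjugate A k r)).updateCol d
        (fun k => adjugate A k s))
      = (A.updateCol c (A.det • (Pi.single r 1 : Fin N → ℝ))).updateCol d
          (A.det • (Pi.single s 1 : Fin N → ℝ)) := by
  ext a b
  rw [Matrix.mul_apply]
  by_cases h1 : b = d
  · subst h1
    have hl : ∀ l, (((1 : Matrix (Fin N) (Fin N) ℝ).updateCol c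
        fun k => adjugate A k r).updateCol b fun k => adjugate A k s) l b = adjugate A l s :=
      fun l => by simp [Matrix.updateCol_apply]
    simp only [hl]
    rw [show (∑ l, A a l * adjugate A l s) = (A * adjugate A) a s from (Matrix.mul_apply).symm,
      Matrix.mul_adjugate]
    simp [Matrix.updateCol_apply, Matrix.one_apply, Pi.single_apply]
  · by_cases h2 : b = c
    · subst h2
      have hl : ∀ l, (((1 : Matrix (Fin N) (Fin N) ℝ).updateCol b
          fun k => adjugate A k r).updateCol d fun k => adjugate A k s) l b
          = adjugate A l r := fun l => by simp [Matrix.updateCol_apply, h1]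
      simp only [hl]
      rw [show (∑ l, A a l * adjugate A l r) = (A * adjugate A) a r from (Matrix.mul_apply).symm,
        Matrix.mul_adjugate]
      simp [Matrix.updateCol_apply, h1, Matrix.one_apply, Pi.single_apply]
    · have hl : ∀ l, (((1 : Matrix (Fin N) (Fin N) ℝ).updateCol c
          fun k => adjugate A k r).updateCol d fun k => adjugate A k s) l b
          = (1 : Matrix (Fin N) (Fin N) ℝ) l b :=
        fun l => by simp [Matrix.updateCol_apply, h1, h2]
      simp only [hl]
      rw [show (∑ l, A a l * (1 : Matrix (Fin N) (Fin N) ℝ) l b) = (A * (1 : Matrix (Fin N) (Fin N) ℝ)) a b from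
        (Matrix.mul_apply).symm, Matrix.mul_one]
      simp [Matrix.updateCol_apply, h1, h2]

lemma fin_val_of_succAbove_lt {N : ℕ} {r s : Fin (N+1)} {s' : Fin N}
    (hs : r.succAbove s' = s) (hrs : r < s) : (s : ℕ) = (s' : ℕ) + 1 := by
  by_cases h : s'.castSucc < r
  · rw [Fin.succAbove_of_castSucc_lt _ _ h] at hs
    subst hs
    exact (lt_asymm h hrs).elim
  · rw [Fin.succAbove_of_le_castSucc _ _ (not_lt.1 h)] at hs
    rw [← hs, Fin.val_succ]

lemma dodgson {N : ℕ} (A : Matrix (Fin (N+2)) (Fin (N+2)) ℝ) (hA : A.det ≠ 0)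
    {r s c d : Fin (N+2)} (hrs : r < s) (hcd : c < d)
    {s' d' : Fin (N+1)} (hs : r.succAbove s' = s) (hd : c.succAbove d' = d) :
    A.det * ((A.submatrix r.succAbove c.succAbove).submatrix s'.succAbove d'.succAbove).det
      = (A.submatrix r.succAbove c.succAbove).det * (A.submatrix s.succAbove d.succAbove).det
        - (A.submatrix r.succAbove d.succAbove).det * (A.submatrix s.succAbove c.succAbove).det := by
  have hcdne : c ≠ d := hcd.ne
  have e1 : A.det * (((1 : Matrix (Fin (N+2)) (Fin (N+2)) ℝ).updateCol c
      (fun k => adjugate A k r)).updateCol d (fun k => adjugate A k s)).det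
      = ((A.updateCol c (A.det • (Pi.single r 1 : Fin (N+2) → ℝ))).updateCol d
          (A.det • (Pi.single s 1 : Fin (N+2) → ℝ))).det := by
    rw [← Matrix.det_mul, mul_adj_cols A hcdne r s]
  rw [det_one_updateCol_two _ _ hcdne] at e1
  rw [Matrix.det_updateCol_smul, updateCol_comm' _ hcdne, Matrix.det_updateCol_smul,
    updateCol_comm' _ hcdne.symm, det_two_single A r s c d s' d' hcdne hs hd] at e1
  simp only [Matrix.adjugate_fin_succ_eq_det_submatrix] at e1
  have hsv : (s : ℕ) = (s' : ℕ) + 1 := fin_val_of_succAbove_lt hs hrs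
  have hdv : (d : ℕ) = (d' : ℕ) + 1 := fin_val_of_succAbove_lt hd hcd
  rw [hsv, hdv] at e1
  have hsign : ((-1 : ℝ) ^ ((r:ℕ) + (c:ℕ))) ≠ 0 := pow_ne_zero _ (by norm_num)
  have hsign2 : ((-1 : ℝ) ^ ((s':ℕ) + (d':ℕ))) ≠ 0 := pow_ne_zero _ (by norm_num)
  apply mul_left_cancel₀ (mul_ne_zero hA (mul_ne_zero hsign hsign2))
  linear_combination (-1 : ℝ) * e1

lemma pminor_eq {n k : ℕ} (M : Matrix (Fin n) (Fin n) ℝ) (S T : Finset (Fin n))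
    (h1 : S.card = k) (h2 : T.card = k) :
    pminor M S T = (M.submatrix (S.orderEmbOfFin h1) (T.orderEmbOfFin h2)).det := by
  subst h1
  rw [pminor, dif_pos h2.symm]

lemma coe_orderEmbOfFin_erase {n k : ℕ} (S : Finset (Fin n)) (h : S.card = k+1)
    (p : Fin (k+1)) (x : Fin n) (hx : S.orderEmbOfFin h p = x)
    (h' : (S.erase x).card = k) :
    ⇑((S.erase x).orderEmbOfFin h') = ⇑(S.orderEmbOfFin h) ∘ p.succAbove := by
  subst hx
  refine (Finset.orderEmbOfFin_unique h' (fun q => ?_) ?_).symm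
  · refine Finset.mem_erase.2 ⟨fun hq => ?_, Finset.orderEmbOfFin_mem _ _ _⟩
    exact Fin.succAbove_ne p q ((S.orderEmbOfFin h).injective hq)
  · exact (S.orderEmbOfFin h).strictMono.comp (Fin.strictMono_succAbove p)

theorem nonpositive_minor_propagates {n : ℕ} (M : Matrix (Fin n) (Fin n) ℝ)
    (I J : Finset (Fin n)) (hIJ : I.card = J.card) (hlt : I.card < n)
    (i i' j j' : Fin n) (hi : i ∈ I) (hj : j ∈ J) (hi' : i' ∉ I) (hj' : j' ∉ J)
    (hii : i < i') (hjj : j < j')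
    (h0 : pminor M I J ≤ 0) :
    pminor M ((insert i' I).erase i) ((insert j' J).erase j) ≤ 0 ∨
    pminor M I ((insert j' J).erase j) ≤ 0 ∨
    pminor M ((insert i' I).erase i) J ≤ 0 ∨
    pminor M (insert i' I) (insert j' J) ≤ 0 ∨
    pminor M (I.erase i) (J.erase j) ≤ 0 := by
  obtain ⟨m, hm⟩ : ∃ m, I.card = m + 1 :=
    ⟨I.card - 1, (Nat.succ_pred_eq_of_pos (Finset.card_pos.2 ⟨i, hi⟩)).symm⟩
  have hJm : J.card = m + 1 := hIJ ▸ hm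
  have hSR : (insert i' I).card = m + 2 := by
    rw [Finset.card_insert_of_notMem hi', hm]
  have hSC : (insert j' J).card = m + 2 := by
    rw [Finset.card_insert_of_notMem hj', hJm]
  set SR := insert i' I with hSRdef
  set SC := insert j' J with hSCdef
  set eR := SR.orderEmbOfFin hSR with heR
  set eC := SC.orderEmbOfFin hSC with heC
  set A : Matrix (Fin (m+2)) (Fin (m+2)) ℝ := M.submatrix eR eC with hA
  obtain ⟨r, hr⟩ : ∃ r, eR r = i := by
    have : i ∈ Set.range ⇑eR := by
      rw [heR, Finset.range_orderEmbOfFin]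
      exact Finset.mem_coe.2 (Finset.mem_insert_of_mem hi)
    exact this
  obtain ⟨s, hs⟩ : ∃ s, eR s = i' := by
    have : i' ∈ Set.range ⇑eR := by
      rw [heR, Finset.range_orderEmbOfFin]
      exact Finset.mem_coe.2 (Finset.mem_insert_self _ _)
    exact this
  obtain ⟨c, hc⟩ : ∃ c, eC c = j := by
    have : j ∈ Set.range ⇑eC := by
      rw [heC, Finset.range_orderEmbOfFin]
      exact Finset.mem_coe.2 (Finset.mem_insert_of_mem hj)
    exact this
  obtain ⟨d, hd⟩ : ∃ d, eC d = j' := by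
    have : j' ∈ Set.range ⇑eC := by
      rw [heC, Finset.range_orderEmbOfFin]
      exact Finset.mem_coe.2 (Finset.mem_insert_self _ _)
    exact this
  have hrs : r < s := eR.lt_iff_lt.1 (by rw [hr, hs]; exact hii)
  have hcd : c < d := eC.lt_iff_lt.1 (by rw [hc, hd]; exact hjj)
  have hcSRe_i : (SR.erase i).card = m + 1 := by
    rw [Finset.card_erase_of_mem (Finset.mem_insert_of_mem hi), hSR]
    omega
  have hcSRe_i' : (SR.erase i').card = m + 1 := by
    rw [Finset.card_erase_of_mem (Finset.mem_insert_self _ _), hSR]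
    omega
  have hcSCe_j : (SC.erase j).card = m + 1 := by
    rw [Finset.card_erase_of_mem (Finset.mem_insert_of_mem hj), hSC]
    omega
  have hcSCe_j' : (SC.erase j').card = m + 1 := by
    rw [Finset.card_erase_of_mem (Finset.mem_insert_self _ _), hSC]
    omega
  have hIe : I = SR.erase i' := by rw [hSRdef, Finset.erase_insert hi']
  have hJe : J = SC.erase j' := by rw [hSCdef, Finset.erase_insert hj']
  have key : ∀ (p q : Fin (m+2)) (x y : Fin n), eR p = x → eC q = y →
      ∀ (h1 : (SR.erase x).card = m+1) (h2 : (SC.erase y).card = m+1),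
      pminor M (SR.erase x) (SC.erase y) = (A.submatrix p.succAbove q.succAbove).det := by
    intro p q x y hx hy h1 h2
    rw [pminor_eq M _ _ h1 h2,
      show ⇑((SR.erase x).orderEmbOfFin h1) = ⇑eR ∘ p.succAbove from
        coe_orderEmbOfFin_erase SR hSR p x hx h1,
      show ⇑((SC.erase y).orderEmbOfFin h2) = ⇑eC ∘ q.succAbove from
        coe_orderEmbOfFin_erase SC hSC q y hy h2,
      hA, Matrix.submatrix_submatrix]
  obtain ⟨s', hs'⟩ : ∃ z, r.succAbove z = s := Fin.exists_succAbove_eq hrs.ne'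
  obtain ⟨d', hd'⟩ : ∃ z, c.succAbove z = d := Fin.exists_succAbove_eq hcd.ne'
  have hBcoe : ⇑((SR.erase i).orderEmbOfFin hcSRe_i) = ⇑eR ∘ r.succAbove :=
    coe_orderEmbOfFin_erase SR hSR r i hr hcSRe_i
  have hCcoe : ⇑((SC.erase j).orderEmbOfFin hcSCe_j) = ⇑eC ∘ c.succAbove :=
    coe_orderEmbOfFin_erase SC hSC c j hc hcSCe_j
  have hBval : ((SR.erase i).orderEmbOfFin hcSRe_i) s' = i' := by
    have := congrFun hBcoe s'
    simp only [Function.comp_apply] at this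
    rw [this, hs', hs]
  have hCval : ((SC.erase j).orderEmbOfFin hcSCe_j) d' = j' := by
    have := congrFun hCcoe d'
    simp only [Function.comp_apply] at this
    rw [this, hd', hd]
  have hcDR : ((SR.erase i).erase i').card = m := by
    rw [Finset.card_erase_of_mem (Finset.mem_erase.2 ⟨hii.ne', Finset.mem_insert_self _ _⟩),
      hcSRe_i]
    omega
  have hcDC : ((SC.erase j).erase j').card = m := by
    rw [Finset.card_erase_of_mem (Finset.mem_erase.2 ⟨hjj.ne', Finset.mem_insert_self _ _⟩),
      hcSCe_j]
    omega
  have keyD : pminor M ((SR.erase i).erase i') ((SC.erase j).erase j')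
      = ((A.submatrix r.succAbove c.succAbove).submatrix s'.succAbove d'.succAbove).det := by
    rw [pminor_eq M _ _ hcDR hcDC,
      show ⇑(((SR.erase i).erase i').orderEmbOfFin hcDR)
          = ⇑((SR.erase i).orderEmbOfFin hcSRe_i) ∘ s'.succAbove from
        coe_orderEmbOfFin_erase (SR.erase i) hcSRe_i s' i' hBval hcDR,
      show ⇑(((SC.erase j).erase j').orderEmbOfFin hcDC)
          = ⇑((SC.erase j).orderEmbOfFin hcSCe_j) ∘ d'.succAbove from
        coe_orderEmbOfFin_erase (SC.erase j) hcSCe_j d' j' hCval hcDC,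
      hBcoe, hCcoe, hA, Matrix.submatrix_submatrix, Matrix.submatrix_submatrix]
    rfl
  have h5R : I.erase i = (SR.erase i).erase i' := by
    rw [Finset.erase_right_comm, hSRdef, Finset.erase_insert hi']
  have h5C : J.erase j = (SC.erase j).erase j' := by
    rw [Finset.erase_right_comm, hSCdef, Finset.erase_insert hj']
  rw [hIe, hJe] at h0
  rw [key s d i' j' hs hd hcSRe_i' hcSCe_j'] at h0
  by_cases hdet : A.det ≤ 0
  · refine Or.inr (Or.inr (Or.inr (Or.inl ?_)))
    rw [pminor_eq M SR SC hSR hSC]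
    exact hdet
  · push_neg at hdet
    have DJ := dodgson A (ne_of_gt hdet) hrs hcd hs' hd'
    by_contra hcon
    push_neg at hcon
    obtain ⟨g1, g2, g3, g4, g5⟩ := hcon
    rw [key r c i j hr hc hcSRe_i hcSCe_j] at g1
    rw [hIe, key s c i' j hs hc hcSRe_i' hcSCe_j] at g2
    rw [hJe, key r d i j' hr hd hcSRe_i hcSCe_j'] at g3
    rw [h5R, h5C, keyD] at g5
    nlinarith [DJ, mul_pos hdet g5, mul_pos g3 g2,
      mul_nonpos_of_nonneg_of_nonpos g1.le h0]
end

section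
/- The initial minors test for 3×3 matrices: a real 3×3 matrix M is totally positive if and only if the following 9 initial minors are positive: the entries m_{11}, m_{12}, m_{13}, m_{21}, m_{31}; the 2×2 minors |M_{{1,2},{1,2}}|, |M_{{1,2},{2,3}}|, |M_{{2,3},{1,2}}|; and det M. -/
open Matrix

/-- The initial minors test for 3×3 matrices: a real 3×3 matrix is totally
positive (all entries, all 2×2 minors and the determinant positive) iff its
nine initial minors are positive. -/
theorem initial_minors_test_3x3 (M : Matrix (Fin 3) (Fin 3) ℝ) :
    ((∀ i j, 0 < M i j) ∧
     (∀ i i' j j' : Fin 3, i < i' → j < j' →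
        0 < M i j * M i' j' - M i j' * M i' j) ∧
     0 < M.det) ↔
    (0 < M 0 0 ∧ 0 < M 0 1 ∧ 0 < M 0 2 ∧ 0 < M 1 0 ∧ 0 < M 2 0 ∧
     0 < M 0 0 * M 1 1 - M 0 1 * M 1 0 ∧
     0 < M 0 1 * M 1 2 - M 0 2 * M 1 1 ∧
     0 < M 1 0 * M 2 1 - M 1 1 * M 2 0 ∧
     0 < M.det) := by
  constructor
  · rintro ⟨h1, h2, h3⟩
    exact ⟨h1 0 0, h1 0 1, h1 0 2, h1 1 0, h1 2 0,
      h2 0 1 0 1 (by decide) (by decide), h2 0 1 1 2 (by decide) (by decide),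
      h2 1 2 0 1 (by decide) (by decide), h3⟩
  · rintro ⟨ha, hb, hc, hd, hg, hA, hB, hC, hdet⟩
    have hdet' : 0 < M 0 0 * (M 1 1 * M 2 2) - M 0 0 * (M 1 2 * M 2 1)
        - M 0 1 * (M 1 0 * M 2 2) + M 0 1 * (M 1 2 * M 2 0)
        + M 0 2 * (M 1 0 * M 2 1) - M 0 2 * (M 1 1 * M 2 0) := by
      rw [Matrix.det_fin_three] at hdet; linarith
    -- entries
    have he : 0 < M 1 1 := by nlinarith [mul_pos hb hd]
    have hf : 0 < M 1 2 := by nlinarith [mul_pos hc he]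
    have hh : 0 < M 2 1 := by nlinarith [mul_pos he hg]
    -- remaining minors
    have hAF : 0 < M 0 0 * M 1 2 - M 0 2 * M 1 0 := by
      nlinarith [mul_pos ha hB, mul_pos hc hA]
    have hAH : 0 < M 0 0 * M 2 1 - M 0 1 * M 2 0 := by
      nlinarith [mul_pos ha hC, mul_pos hg hA]
    have hEI : 0 < M 1 1 * M 2 2 - M 1 2 * M 2 1 := by
      nlinarith [mul_pos hdet' he, mul_pos hB hC]
    have hi : 0 < M 2 2 := by nlinarith [mul_pos hf hh]
    have hDI : 0 < M 1 0 * M 2 2 - M 1 2 * M 2 0 := by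
      nlinarith [mul_pos hd hEI, mul_pos hf hC]
    have hBI : 0 < M 0 1 * M 2 2 - M 0 2 * M 2 1 := by
      nlinarith [mul_pos hb hEI, mul_pos hh hB]
    have hAI : 0 < M 0 0 * M 2 2 - M 0 2 * M 2 0 := by
      nlinarith [mul_pos ha hDI, mul_pos hg hAF]
    refine ⟨?_, ?_, hdet⟩
    · intro i j
      fin_cases i <;> fin_cases j <;> assumption
    · intro i i' j j' hi hj
      fin_cases i <;> fin_cases i' <;> fin_cases j <;> fin_cases j' <;>
        first
          | exact absurd hi (by decide)
          | exact absurd hj (by decide)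
          | assumption
end

section
/- The solid 2-minor at any position is 2-essential for n = 3: for each I = {i, i+1}, J = {j, j+1} ⊆ {1,2,3}, there exists a 3×3 real matrix M with |M_{I,J}| ≤ 0 and every other minor of order ≤ 2 positive. -/
open Matrix

/-- The 2×2 minor of `M` on rows `r < r'` and columns `c < c'`. -/
def minor2 (M : Matrix (Fin 3) (Fin 3) ℝ) (r r' c c' : Fin 3) : ℝ :=
  M r c * M r' c' - M r c' * M r' c

/-- Every solid 2-minor of a 3×3 matrix is 2-essential: for each solid position
there is a matrix making that minor nonpositive while every entry and every
other 2×2 minor is positive. -/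
theorem solid_two_minors_two_essential_n3 (i j : Fin 2) :
    ∃ M : Matrix (Fin 3) (Fin 3) ℝ,
      minor2 M i.castSucc i.succ j.castSucc j.succ ≤ 0 ∧
      (∀ a b : Fin 3, 0 < M a b) ∧
      (∀ r r' c c' : Fin 3, r < r' → c < c' →
        ¬(r = i.castSucc ∧ r' = i.succ ∧ c = j.castSucc ∧ c' = j.succ) →
        0 < minor2 M r r' c c') := by
  fin_cases i <;> fin_cases j
  · refine ⟨!![1,1,1;1,1,2;1,2,5], ?_, ?_, ?_⟩
    · simp [minor2]
    · intro a b; fin_cases a <;> fin_cases b <;> norm_num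
    · intro r r' c c' hr hc hne
      fin_cases r <;> fin_cases r' <;> fin_cases c <;> fin_cases c' <;>
        simp_all [minor2, Matrix.vecHead, Matrix.vecTail] <;> norm_num
  · refine ⟨!![3,1,1;2,1,1;1,2,3], ?_, ?_, ?_⟩
    · simp [minor2]
    · intro a b; fin_cases a <;> fin_cases b <;> norm_num
    · intro r r' c c' hr hc hne
      fin_cases r <;> fin_cases r' <;> fin_cases c <;> fin_cases c' <;>
        simp_all [minor2, Matrix.vecHead, Matrix.vecTail] <;> norm_num
  · refine ⟨!![3,2,1;1,1,2;1,1,3], ?_, ?_, ?_⟩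
    · simp [minor2]
    · intro a b; fin_cases a <;> fin_cases b <;> norm_num
    · intro r r' c c' hr hc hne
      fin_cases r <;> fin_cases r' <;> fin_cases c <;> fin_cases c' <;>
        simp_all [minor2, Matrix.vecHead, Matrix.vecTail] <;> norm_num
  · refine ⟨!![7,3,2;2,1,1;1,1,1], ?_, ?_, ?_⟩
    · simp [minor2]
    · intro a b; fin_cases a <;> fin_cases b <;> norm_num
    · intro r r' c c' hr hc hne
      fin_cases r <;> fin_cases r' <;> fin_cases c <;> fin_cases c' <;>
        simp_all [minor2, Matrix.vecHead, Matrix.vecTail] <;> norm_num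
end
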